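/- arXiv:2012.12154 — 4 statements merged into one kernel-verified Lean document; each statement's English description precedes it below -/
import Mathlib

section
/- Let 0 < d, 2d ≤ s, and let X, Y be independent random variables each uniformly distributed on [0,s]. For any r with 0 < r < d/s, the diversified position ν = (1−r)X + rY satisfies P(ν < d) = (2d − r·s)/(2s(1−r)). -/
/-! Condition on `Y`: by independence and Fubini, the probability is the average over
`y ∈ [0, s]` of `P(X < (d - r y) / (1 - r))`. Because `r < d / s ≤ 1 / 2`, this threshold lies
in `[0, s]` for every such `y` (conditioning on `X` instead would not have this property), so the
uniform distribution function is linear there and the average is an elementary integral. -/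

open MeasureTheory ProbabilityTheory Set

/-- The uniform probability distribution on the interval `[0, s]`. -/
noncomputable def uniformOnIcc (s : ℝ) : Measure ℝ :=
  (ENNReal.ofReal s)⁻¹ • (volume.restrict (Icc (0 : ℝ) s))

theorem ProbabilityTheory.IndepFun.measure_preimage_prod_eq_lintegral {Ω α β : Type*}
    [MeasurableSpace Ω] [MeasurableSpace α] [MeasurableSpace β] {P : Measure Ω} [IsFiniteMeasure P]
    {X : Ω → α} {Y : Ω → β} (hXm : Measurable X) (hYm : Measurable Y) (hXY : IndepFun X Y P)
    {S : Set (α × β)} (hS : MeasurableSet S) :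
    P ((fun ω => (X ω, Y ω)) ⁻¹' S) = ∫⁻ x, P.map Y (Prod.mk x ⁻¹' S) ∂P.map X := by
  rw [← Measure.map_apply (hXm.prodMk hYm) hS,
    (indepFun_iff_map_prod_eq_prod_map_map hXm.aemeasurable hYm.aemeasurable).mp hXY,
    Measure.prod_apply hS]

theorem ae_mem_Icc_uniformOnIcc (s : ℝ) : ∀ᵐ y ∂uniformOnIcc s, y ∈ Icc 0 s :=
  Measure.ae_smul_measure (ae_restrict_mem measurableSet_Icc) _

theorem uniformOnIcc_Iio {s t : ℝ} (hs : 0 < s) (hts : t ≤ s) :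
    uniformOnIcc s (Iio t) = ENNReal.ofReal (t / s) := by
  have hIcc : Iio t ∩ Icc 0 s = Ico 0 t := by
    ext x
    simp only [mem_inter_iff, mem_Iio, mem_Icc, mem_Ico]
    constructor
    · rintro ⟨hxt, hx0, -⟩
      exact ⟨hx0, hxt⟩
    · rintro ⟨hx0, hxt⟩
      exact ⟨hxt, hx0, hxt.le.trans hts⟩
  rw [uniformOnIcc, Measure.smul_apply, Measure.restrict_apply measurableSet_Iio, hIcc,
    Real.volume_Ico, sub_zero, smul_eq_mul, ENNReal.ofReal_div_of_pos hs, ENNReal.div_eq_inv_mul]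

theorem lintegral_uniformOnIcc_ofReal {s : ℝ} (hs : 0 < s) {f : ℝ → ℝ}
    (hf : IntegrableOn f (Icc 0 s)) (hf0 : ∀ y ∈ Icc 0 s, 0 ≤ f y) :
    ∫⁻ y, ENNReal.ofReal (f y) ∂uniformOnIcc s = ENNReal.ofReal ((∫ y in 0..s, f y) / s) := by
  rw [uniformOnIcc, lintegral_smul_measure,
    ← ofReal_integral_eq_lintegral_ofReal hf (ae_restrict_of_forall_mem measurableSet_Icc hf0),
    integral_Icc_eq_integral_Ioc, ← intervalIntegral.integral_of_le hs.le, smul_eq_mul,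
    ← ENNReal.ofReal_inv_of_pos hs, ← ENNReal.ofReal_mul (by positivity), inv_mul_eq_div]

theorem integral_sub_const_mul_id (a b s : ℝ) :
    ∫ y in 0..s, (a - b * y) = a * s - b * s ^ 2 / 2 := by
  rw [intervalIntegral.integral_sub intervalIntegrable_const
    (intervalIntegral.intervalIntegrable_id.const_mul b), intervalIntegral.integral_const_mul,
    integral_id, intervalIntegral.integral_const]
  simp only [sub_zero, smul_eq_mul]
  ring

/-- for `0 < r < d/s`, the diversified position `ν = (1-r)X + rY`
satisfies `P(ν < d) = (2d - r s)/(2 s (1 - r))`. -/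
theorem prob_individual_default_small_r
    {Ω : Type*} [MeasurableSpace Ω] (P : Measure Ω) [IsProbabilityMeasure P]
    (s d : ℝ) (hd : 0 < d) (hs : 2 * d ≤ s)
    (X Y : Ω → ℝ) (hXm : Measurable X) (hYm : Measurable Y)
    (hX : P.map X = uniformOnIcc s) (hY : P.map Y = uniformOnIcc s)
    (hXY : IndepFun X Y P)
    (r : ℝ) (hr0 : 0 < r) (hr1 : r < d / s) :
    P {ω | (1 - r) * X ω + r * Y ω < d}
      = ENNReal.ofReal ((2 * d - r * s) / (2 * s * (1 - r))) := by
  have hs0 : 0 < s := by linarith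
  have hrs : r * s < d := (lt_div_iff₀ hs0).mp hr1
  have h1r : 0 < 1 - r := by nlinarith
  set S := {p : ℝ × ℝ | (1 - r) * p.2 + r * p.1 < d}
  have hS : MeasurableSet S := measurableSet_lt (by fun_prop) measurable_const
  have hsection : ∀ y, Prod.mk y ⁻¹' S = Iio ((d - r * y) / (1 - r)) := fun y => by
    ext x
    simp only [S, mem_preimage, mem_ofPred_eq, mem_Iio, lt_div_iff₀ h1r]
    constructor <;> intro h <;> linarith
  have hthreshold : ∀ y ∈ Icc 0 s, 0 ≤ (d - r * y) / (1 - r) ∧ (d - r * y) / (1 - r) ≤ s :=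
    fun y ⟨hy0, hys⟩ => ⟨div_nonneg (by nlinarith) h1r.le, (div_le_iff₀ h1r).mpr (by nlinarith)⟩
  calc P {ω | (1 - r) * X ω + r * Y ω < d}
      = ∫⁻ y, uniformOnIcc s (Prod.mk y ⁻¹' S) ∂uniformOnIcc s := by
        have h := hXY.symm.measure_preimage_prod_eq_lintegral hYm hXm hS
        rwa [hX, hY] at h
    _ = ∫⁻ y, ENNReal.ofReal ((d - r * y) / (1 - r) / s) ∂uniformOnIcc s := by
        refine lintegral_congr_ae ((ae_mem_Icc_uniformOnIcc s).mono fun y hy => ?_)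
        dsimp only
        rw [hsection, uniformOnIcc_Iio hs0 (hthreshold y hy).2]
    _ = ENNReal.ofReal ((∫ y in 0..s, (d - r * y) / (1 - r) / s) / s) :=
        lintegral_uniformOnIcc_ofReal hs0 (Continuous.integrableOn_Icc (by fun_prop))
          fun y hy => div_nonneg (hthreshold y hy).1 hs0.le
    _ = ENNReal.ofReal ((2 * d - r * s) / (2 * s * (1 - r))) := by
        rw [intervalIntegral.integral_div, intervalIntegral.integral_div,
          integral_sub_const_mul_id]
        congr 1
        field_simp
end

section
/- Let 0 < d < s and let X, Y be independent random variables each uniformly distributed on [0,s]. Let r₁, r₂ ∈ [0,1] with r₁ + r₂ < 1 and suppose d ≤ s(1−r₁) and d ≤ s(1−r₂). Then the diversified positions ν₁ = (1−r₁)X + r₁Y and ν₂ = r₂X + (1−r₂)Y satisfy P(ν₁ ≤ d and ν₂ ≤ d) = (1/2)·(d/s)²·(1/(1−r₁) + 1/(1−r₂)). -/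
open MeasureTheory ProbabilityTheory Set

theorem MeasureTheory.Measure.prod_diagonal_eq_zero {α : Type*} [MeasurableSpace α]
    [MeasurableEq α] (μ ν : Measure α) [SFinite ν] [NullSingletonClass ν] :
    μ.prod ν (diagonal α) = 0 := by
  rw [Measure.prod_apply measurableSet_diagonal]
  simp [Set.diagonal]

theorem setLIntegral_Icc_ofReal_sub_div {d a : ℝ} (hd : 0 ≤ d) (ha : 0 ≤ a) :
    ∫⁻ x in Icc 0 d, ENNReal.ofReal ((d - x) / a) = ENNReal.ofReal (d ^ 2 / (2 * a)) := by
  have hnonneg : 0 ≤ᵐ[volume.restrict (Icc 0 d)] fun x => (d - x) / a :=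
    (ae_restrict_iff' measurableSet_Icc).2 <| .of_forall fun x hx =>
      div_nonneg (sub_nonneg.2 hx.2) ha
  rw [← ofReal_integral_eq_lintegral_ofReal (Continuous.integrableOn_Icc (by fun_prop)) hnonneg,
    integral_Icc_eq_integral_Ioc, ← intervalIntegral.integral_of_le hd]
  congr 1
  simp only [intervalIntegral.integral_div, intervalIntegral.integral_sub intervalIntegrable_const
    intervalIntegral.intervalIntegrable_id, intervalIntegral.integral_const, integral_id,
    sub_zero, smul_eq_mul]
  ring

/-- Closed triangle with vertices `(0, 0)`, `(0, d / (1 - r))` and `(d, d)`. -/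
def upperTriangle (r d : ℝ) : Set (ℝ × ℝ) :=
  {p | 0 ≤ p.1 ∧ p.1 ≤ p.2 ∧ r * p.1 + (1 - r) * p.2 ≤ d}

theorem measurableSet_upperTriangle (r d : ℝ) : MeasurableSet (upperTriangle r d) := by
  unfold upperTriangle
  measurability

theorem volume_preimage_prodMk_upperTriangle {r : ℝ} (hr : r < 1) (d x : ℝ) :
    volume (Prod.mk x ⁻¹' upperTriangle r d) =
      (Icc 0 d).indicator (fun x => ENNReal.ofReal ((d - x) / (1 - r))) x := by
  have h1r : 0 < 1 - r := sub_pos.2 hr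
  rcases lt_or_ge x 0 with hx | hx
  · have hempty : Prod.mk x ⁻¹' upperTriangle r d = ∅ :=
      eq_empty_of_forall_notMem fun y hy => hx.not_ge hy.1
    rw [hempty, measure_empty, indicator_of_notMem fun h => hx.not_ge h.1]
  have hslice : Prod.mk x ⁻¹' upperTriangle r d = Icc x (x + (d - x) / (1 - r)) := by
    ext y
    simp only [upperTriangle, mem_preimage, mem_ofPred_eq, mem_Icc, hx, true_and,
      ← sub_le_iff_le_add', le_div_iff₀ h1r]
    constructor <;> rintro ⟨h, h'⟩ <;> exact ⟨h, by linarith⟩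
  rw [hslice, Real.volume_Icc, add_sub_cancel_left]
  by_cases hxd : x ≤ d
  · rw [indicator_of_mem (show x ∈ Icc (0 : ℝ) d from ⟨hx, hxd⟩)]
  · rw [indicator_of_notMem fun h => hxd h.2, ENNReal.ofReal_eq_zero]
    exact div_nonpos_of_nonpos_of_nonneg (by linarith) h1r.le

theorem volume_upperTriangle {r d : ℝ} (hr : r < 1) (hd : 0 ≤ d) :
    volume (upperTriangle r d) = ENNReal.ofReal (d ^ 2 / (2 * (1 - r))) := by
  rw [Measure.volume_eq_prod, Measure.prod_apply (measurableSet_upperTriangle r d)]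
  simp_rw [volume_preimage_prodMk_upperTriangle hr]
  rw [lintegral_indicator measurableSet_Icc, setLIntegral_Icc_ofReal_sub_div hd (by linarith)]

theorem uniformOnIcc_prod_apply (s : ℝ) {S : Set (ℝ × ℝ)} (hS : MeasurableSet S) :
    (uniformOnIcc s).prod (uniformOnIcc s) S
      = (ENNReal.ofReal s)⁻¹ * (ENNReal.ofReal s)⁻¹ * volume (S ∩ Icc 0 s ×ˢ Icc 0 s) := by
  rw [uniformOnIcc, Measure.prod_smul_left, Measure.prod_smul_right, Measure.prod_restrict,
    ← Measure.volume_eq_prod, Measure.smul_apply, Measure.smul_apply, Measure.restrict_apply hS,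
    smul_eq_mul, smul_eq_mul, mul_assoc]

theorem volume_preimage_swap_upperTriangle_union_upperTriangle {r₁ r₂ d : ℝ} (hr₁ : r₁ < 1)
    (hr₂ : r₂ < 1) (hd : 0 ≤ d) :
    volume (Prod.swap ⁻¹' upperTriangle r₁ d ∪ upperTriangle r₂ d)
      = ENNReal.ofReal (d ^ 2 / (2 * (1 - r₁))) + ENNReal.ofReal (d ^ 2 / (2 * (1 - r₂))) := by
  have hswap : MeasurePreserving Prod.swap (volume : Measure (ℝ × ℝ)) volume := by
    simpa only [Measure.volume_eq_prod] using Measure.measurePreserving_swap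
  have hdisj : AEDisjoint volume (Prod.swap ⁻¹' upperTriangle r₁ d) (upperTriangle r₂ d) := by
    have hdiag : volume (diagonal ℝ) = 0 := by
      rw [Measure.volume_eq_prod]
      exact Measure.prod_diagonal_eq_zero _ _
    exact measure_mono_null (fun p hp => le_antisymm hp.2.2.1 hp.1.2.1) hdiag
  rw [measure_union₀ (measurableSet_upperTriangle r₂ d).nullMeasurableSet hdisj,
    hswap.measure_preimage (measurableSet_upperTriangle r₁ d).nullMeasurableSet,
    volume_upperTriangle hr₁ hd, volume_upperTriangle hr₂ hd]

def jointDefaultRegion (r₁ r₂ d : ℝ) : Set (ℝ × ℝ) :=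
  {p | (1 - r₁) * p.1 + r₁ * p.2 ≤ d ∧ r₂ * p.1 + (1 - r₂) * p.2 ≤ d}

theorem measurableSet_jointDefaultRegion (r₁ r₂ d : ℝ) :
    MeasurableSet (jointDefaultRegion r₁ r₂ d) := by
  unfold jointDefaultRegion
  measurability

theorem jointDefaultRegion_inter_Icc_prod_Icc {r₁ r₂ d s : ℝ} (hr₁ : 0 ≤ r₁) (hr₂ : 0 ≤ r₂)
    (hsum : r₁ + r₂ < 1) (h1 : d ≤ s * (1 - r₁)) (h2 : d ≤ s * (1 - r₂)) :
    jointDefaultRegion r₁ r₂ d ∩ Icc 0 s ×ˢ Icc 0 s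
      = Prod.swap ⁻¹' upperTriangle r₁ d ∪ upperTriangle r₂ d := by
  ext ⟨x, y⟩
  simp only [jointDefaultRegion, upperTriangle, mem_inter_iff, mem_ofPred_eq, mem_prod, mem_Icc,
    mem_union, mem_preimage, Prod.swap_prod_mk]
  constructor
  · rintro ⟨⟨hν₁, hν₂⟩, ⟨hx, -⟩, hy, -⟩
    rcases le_total y x with hyx | hxy
    · exact Or.inl ⟨hy, hyx, by linarith⟩
    · exact Or.inr ⟨hx, hxy, hν₂⟩
  · rintro (⟨hy, hyx, hν₁⟩ | ⟨hx, hxy, hν₂⟩)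
    · refine ⟨⟨by linarith, ?_⟩, ⟨hy.trans hyx, ?_⟩, hy, ?_⟩ <;>
        nlinarith [mul_nonneg (by linarith : (0 : ℝ) ≤ 1 - r₁ - r₂) (sub_nonneg.2 hyx),
          mul_nonneg hr₁ hy]
    · refine ⟨⟨?_, hν₂⟩, ⟨hx, ?_⟩, hx.trans hxy, ?_⟩ <;>
        nlinarith [mul_nonneg (by linarith : (0 : ℝ) ≤ 1 - r₁ - r₂) (sub_nonneg.2 hxy),
          mul_nonneg hr₂ hx]

/-- for `r₁ + r₂ < 1` with `d ≤ s(1-r₁)` and `d ≤ s(1-r₂)`, the probability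
of joint default is `(1/2)·(d/s)²·(1/(1-r₁) + 1/(1-r₂))`. -/
theorem prob_joint_default_sum_lt_one
    {Ω : Type*} [MeasurableSpace Ω] (P : Measure Ω) [IsProbabilityMeasure P]
    (s d : ℝ) (hd : 0 < d) (hds : d < s)
    (X Y : Ω → ℝ) (hXm : Measurable X) (hYm : Measurable Y)
    (hX : P.map X = uniformOnIcc s) (hY : P.map Y = uniformOnIcc s)
    (hXY : IndepFun X Y P)
    (r₁ r₂ : ℝ) (hr₁ : r₁ ∈ Icc (0 : ℝ) 1) (hr₂ : r₂ ∈ Icc (0 : ℝ) 1)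
    (hsum : r₁ + r₂ < 1) (h1 : d ≤ s * (1 - r₁)) (h2 : d ≤ s * (1 - r₂)) :
    P {ω | (1 - r₁) * X ω + r₁ * Y ω ≤ d ∧ r₂ * X ω + (1 - r₂) * Y ω ≤ d}
      = ENNReal.ofReal ((1 / 2) * (d / s) ^ 2 * (1 / (1 - r₁) + 1 / (1 - r₂))) := by
  have hs : 0 < s := hd.trans hds
  have hr₁1 : r₁ < 1 := by linarith [hr₂.1]
  have hr₂1 : r₂ < 1 := by linarith [hr₁.1]
  have hlaw : P.map (fun ω => (X ω, Y ω)) = (uniformOnIcc s).prod (uniformOnIcc s) := by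
    rw [(indepFun_iff_map_prod_eq_prod_map_map hXm.aemeasurable hYm.aemeasurable).1 hXY, hX, hY]
  change P ((fun ω => (X ω, Y ω)) ⁻¹' jointDefaultRegion r₁ r₂ d) = _
  rw [← Measure.map_apply (hXm.prodMk hYm) (measurableSet_jointDefaultRegion r₁ r₂ d), hlaw,
    uniformOnIcc_prod_apply s (measurableSet_jointDefaultRegion r₁ r₂ d),
    jointDefaultRegion_inter_Icc_prod_Icc hr₁.1 hr₂.1 hsum h1 h2,
    volume_preimage_swap_upperTriangle_union_upperTriangle hr₁1 hr₂1 hd.le,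
    ← ENNReal.ofReal_inv_of_pos hs, ← ENNReal.ofReal_add (by positivity) (by positivity),
    ← ENNReal.ofReal_mul (by positivity), ← ENNReal.ofReal_mul (by positivity)]
  congr 1
  field_simp
end

section
/- Let 0 < d < s, let X and Y be independent random variables each uniformly distributed on [0,s], let r ∈ (0,1) and α ∈ (0,1), and set R = (1−r)X + rY − d and K = s·√(2r(1−r)(1−α)). If K ≤ (1−r)s and K ≤ rs, then P(R ≤ −(d − K)) = 1 − α; that is, VaR_α(R) = d − s·√(2r(1−r)(1−α)). (The middle case of Lemma 3.2.) -/
/-!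
By independence the joint law of `(X, Y)` is the uniform distribution on the square `[0, s]²`,
so the probability is the area of `{(x, y) ∈ [0, s]² | (1 - r) x + r y ≤ K}` divided by `s²`.
The conditions `K ≤ (1 - r) s` and `K ≤ r s` say that this region is the whole right triangle
with legs `K / (1 - r)` and `K / r`, whose area is `K² / (2 r (1 - r)) = s² (1 - α)`.
-/

open MeasureTheory ProbabilityTheory Set

lemma uniformOnIcc_prod_uniformOnIcc (s : ℝ) :
    (uniformOnIcc s).prod (uniformOnIcc s)
      = (ENNReal.ofReal s)⁻¹ ^ 2 • volume.restrict (Icc 0 s ×ˢ Icc 0 s) := by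
  rw [uniformOnIcc, Measure.prod_smul_left, Measure.prod_smul_right, smul_smul,
    Measure.prod_restrict, ← Measure.volume_eq_prod, sq]

lemma volume_setOf_mul_add_mul_le_inter_Icc_prod_Icc {a b c s : ℝ} (ha : 0 ≤ a) (hb : 0 < b)
    (hcb : c ≤ b * s) :
    volume ({p : ℝ × ℝ | a * p.1 + b * p.2 ≤ c} ∩ Icc 0 s ×ˢ Icc 0 s)
      = ∫⁻ x in Icc 0 s, ENNReal.ofReal ((c - a * x) / b) := by
  have hS : MeasurableSet {p : ℝ × ℝ | a * p.1 + b * p.2 ≤ c} :=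
    measurableSet_le (by fun_prop) measurable_const
  have hslice : ∀ x ∈ Icc 0 s,
      Prod.mk x ⁻¹' ({p : ℝ × ℝ | a * p.1 + b * p.2 ≤ c} ∩ Icc 0 s ×ˢ Icc 0 s)
        = Icc 0 ((c - a * x) / b) := by
    intro x hx
    ext y
    simp only [mem_preimage, mem_inter_iff, mem_ofPred_eq, mem_prod, mem_Icc, le_div_iff₀ hb]
    constructor
    · rintro ⟨hxy, -, hy, -⟩
      exact ⟨hy, by linarith⟩
    · rintro ⟨hy, hxy⟩
      refine ⟨by linarith, hx, hy, ?_⟩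
      nlinarith [mul_nonneg ha hx.1]
  rw [Measure.volume_eq_prod,
    Measure.prod_apply (hS.inter (measurableSet_Icc.prod measurableSet_Icc)),
    ← lintegral_indicator measurableSet_Icc]
  congr 1 with x
  by_cases hx : x ∈ Icc 0 s
  · rw [hslice x hx, Real.volume_Icc, indicator_of_mem hx, sub_zero]
  · rw [indicator_of_notMem hx, ← measure_empty (μ := (volume : Measure ℝ))]
    exact congrArg _ (eq_empty_of_forall_notMem fun y hy ↦ hx hy.2.1)

lemma setLIntegral_Icc_ofReal_sub_mul_div {a b c s : ℝ} (ha : 0 < a) (hb : 0 < b) (hc : 0 ≤ c)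
    (hca : c ≤ a * s) :
    ∫⁻ x in Icc 0 s, ENNReal.ofReal ((c - a * x) / b) = ENNReal.ofReal (c ^ 2 / (2 * a * b)) := by
  have hc_div : 0 ≤ c / a := div_nonneg hc ha.le
  have hvanish : ∀ x ∈ Ioc (c / a) s, ENNReal.ofReal ((c - a * x) / b) = 0 := fun x hx ↦ by
    have : c < a * x := (div_lt_iff₀' ha).1 hx.1
    exact ENNReal.ofReal_of_nonpos (div_nonpos_of_nonpos_of_nonneg (by linarith) hb.le)
  have hinterval : ∫ x in (0 : ℝ)..c / a, (c - a * x) / b = c ^ 2 / (2 * a * b) := by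
    rw [intervalIntegral.integral_div, intervalIntegral.integral_sub intervalIntegrable_const
      ((continuous_const_mul a).intervalIntegrable _ _), intervalIntegral.integral_const,
      intervalIntegral.integral_const_mul, integral_id]
    simp only [smul_eq_mul, sub_zero]
    field_simp
    ring
  rw [← Icc_union_Ioc_eq_Icc hc_div ((div_le_iff₀' ha).2 hca),
    lintegral_union measurableSet_Ioc ((Iic_disjoint_Ioc le_rfl).mono_left Icc_subset_Iic_self),
    setLIntegral_congr_fun measurableSet_Ioc hvanish, lintegral_zero, add_zero,
    setLIntegral_congr Ioc_ae_eq_Icc.symm, ← ofReal_integral_eq_lintegral_ofReal,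
    ← intervalIntegral.integral_of_le hc_div, hinterval]
  · exact (Continuous.integrableOn_Ioc (by fun_prop))
  · refine (ae_restrict_iff' measurableSet_Ioc).2 (.of_forall fun x hx ↦ ?_)
    have : a * x ≤ c := (le_div_iff₀' ha).1 hx.2
    exact div_nonneg (by linarith) hb.le

theorem measure_mul_add_mul_le_of_indepFun_uniformOnIcc {Ω : Type*} [MeasurableSpace Ω]
    {P : Measure Ω} [IsFiniteMeasure P] {X Y : Ω → ℝ} (hXm : Measurable X) (hYm : Measurable Y)
    {s a b c : ℝ} (hX : P.map X = uniformOnIcc s) (hY : P.map Y = uniformOnIcc s)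
    (hXY : IndepFun X Y P) (hs : 0 < s) (ha : 0 < a) (hb : 0 < b) (hc : 0 ≤ c)
    (hca : c ≤ a * s) (hcb : c ≤ b * s) :
    P {ω | a * X ω + b * Y ω ≤ c} = ENNReal.ofReal (c ^ 2 / (2 * a * b * s ^ 2)) := by
  have hS : MeasurableSet {p : ℝ × ℝ | a * p.1 + b * p.2 ≤ c} :=
    measurableSet_le (by fun_prop) measurable_const
  change P ((fun ω ↦ (X ω, Y ω)) ⁻¹' {p : ℝ × ℝ | a * p.1 + b * p.2 ≤ c}) = _
  rw [← Measure.map_apply (hXm.prodMk hYm) hS,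
    hXY.map_prod_eq_prod_map_map hXm.aemeasurable hYm.aemeasurable, hX, hY,
    uniformOnIcc_prod_uniformOnIcc, Measure.smul_apply, Measure.restrict_apply hS,
    volume_setOf_mul_add_mul_le_inter_Icc_prod_Icc ha.le hb hcb,
    setLIntegral_Icc_ofReal_sub_mul_div ha hb hc hca, smul_eq_mul, ← div_div (c ^ 2) _ (s ^ 2),
    ENNReal.ofReal_div_of_pos (by positivity : 0 < s ^ 2), ENNReal.ofReal_pow hs.le,
    ENNReal.div_eq_inv_mul, ENNReal.inv_pow]

/-- middle case of Lemma 3.2: with `R = (1-r)X + rY - d` and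
`K = s·√(2r(1-r)(1-α))`, if `K ≤ (1-r)s` and `K ≤ rs` then `P(R ≤ -(d - K)) = 1 - α`,
i.e. `VaR_α(R) = d - s·√(2r(1-r)(1-α))`. -/
theorem var_of_diversified_position_middle_case
    {Ω : Type*} [MeasurableSpace Ω] (P : Measure Ω) [IsProbabilityMeasure P]
    (s d : ℝ) (hd : 0 < d) (hds : d < s)
    (X Y : Ω → ℝ) (hXm : Measurable X) (hYm : Measurable Y)
    (hX : P.map X = uniformOnIcc s) (hY : P.map Y = uniformOnIcc s)
    (hXY : IndepFun X Y P)
    (r : ℝ) (hr : r ∈ Ioo (0 : ℝ) 1) (α : ℝ) (hα : α ∈ Ioo (0 : ℝ) 1)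
    (hK1 : s * Real.sqrt (2 * r * (1 - r) * (1 - α)) ≤ (1 - r) * s)
    (hK2 : s * Real.sqrt (2 * r * (1 - r) * (1 - α)) ≤ r * s) :
    P {ω | (1 - r) * X ω + r * Y ω - d
        ≤ -(d - s * Real.sqrt (2 * r * (1 - r) * (1 - α)))}
      = ENNReal.ofReal (1 - α) := by
  obtain ⟨hr0, hr1⟩ := hr
  have hs : 0 < s := hd.trans hds
  have hK_sq : (s * Real.sqrt (2 * r * (1 - r) * (1 - α))) ^ 2
      = s ^ 2 * (2 * r * (1 - r) * (1 - α)) := by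
    rw [mul_pow, Real.sq_sqrt (mul_nonneg (by nlinarith) (sub_pos.2 hα.2).le)]
  simp only [neg_sub, sub_le_sub_iff_right]
  rw [measure_mul_add_mul_le_of_indepFun_uniformOnIcc hXm hYm hX hY hXY hs (sub_pos.2 hr1) hr0
    (by positivity) hK1 hK2, hK_sq]
  congr 1
  field_simp
end

section
/- Let 0 < d < s, let X and Y be independent random variables each uniformly distributed on [0,s], let r ∈ (0,1) and α ∈ [1/2, 1), and assume s·√(2r(1−r)(1−α)) ≤ (1−r)s and s·√(2r(1−r)(1−α)) ≤ rs. Then P(X + Y − 2d ≤ −(2d − s·√(2(1−α)))) = 1 − α, i.e. VaR_α(X + Y − 2d) = 2d − s·√(2(1−α)); and with r₁ = r₂ = r, so that R(r₁) + R(r₂) = X + Y − 2d, one has VaR_α(R(r₁) + R(r₂)) ≤ VaR_α(R(r₁)) + VaR_α(R(r₂)), i.e. 2d − s·√(2(1−α)) ≤ 2·(d − s·√(2r(1−r)(1−α))). (Theorem 3.5.) -/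
/-!
By independence, `P(X + Y ≤ t)` is the `uniformOnIcc s ⊗ uniformOnIcc s` measure of the
half-plane `x + y ≤ t`; for `0 ≤ t ≤ s` it cuts a right triangle of area `t² / 2` from the square
`[0, s]²`, so `P(X + Y ≤ t) = t² / (2 s²)`. Since `α ≥ 1/2`, the point
`t = s √(2 (1 - α))` lies in `[0, s]` and has probability exactly `1 - α`. The inequality between
the values at risk reduces to `2 √(2 r (1 - r) (1 - α)) ≤ √(2 (1 - α))`, i.e. `4 r (1 - r) ≤ 1`.
-/

open MeasureTheory ProbabilityTheory Set

instance (s : ℝ) : SFinite (uniformOnIcc s) := by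
  unfold uniformOnIcc; infer_instance

lemma uniformOnIcc_Iic (s a : ℝ) :
    uniformOnIcc s (Iic a) = (ENNReal.ofReal s)⁻¹ * ENNReal.ofReal (min s a) := by
  have hinter : Iic a ∩ Icc 0 s = Icc 0 (min s a) := by
    ext y
    simp only [mem_inter_iff, mem_Icc, mem_Iic, le_min_iff]
    tauto
  rw [uniformOnIcc, Measure.smul_apply, smul_eq_mul, Measure.restrict_apply measurableSet_Iic,
    hinter, Real.volume_Icc, sub_zero]

lemma lintegral_Icc_ofReal_sub {s t : ℝ} (ht0 : 0 ≤ t) (hts : t ≤ s) :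
    ∫⁻ x in Icc 0 s, ENNReal.ofReal (t - x) = ENNReal.ofReal (t ^ 2 / 2) := by
  have hdisj : Disjoint (Icc 0 t) (Ioc t s) :=
    (Iic_disjoint_Ioc le_rfl).mono_left Icc_subset_Iic_self
  have hvanish : ∫⁻ x in Ioc t s, ENNReal.ofReal (t - x) = 0 :=
    setLIntegral_eq_zero measurableSet_Ioc fun x hx ↦
      ENNReal.ofReal_eq_zero.mpr (by linarith [hx.1])
  have hpos : 0 ≤ᵐ[volume.restrict (Icc 0 t)] fun x ↦ t - x :=
    (ae_restrict_iff' measurableSet_Icc).2 <| ae_of_all _ fun x hx ↦ sub_nonneg.2 hx.2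
  have hint : ∫ x in (0 : ℝ)..t, (t - x) = t ^ 2 / 2 := by
    simp [intervalIntegral.integral_comp_sub_left (fun x ↦ x), integral_id]
  rw [← Icc_union_Ioc_eq_Icc ht0 hts, lintegral_union measurableSet_Ioc hdisj, hvanish, add_zero,
    ← ofReal_integral_eq_lintegral_ofReal
      (continuous_sub_left t).integrableOn_Icc hpos, integral_Icc_eq_integral_Ioc,
    ← intervalIntegral.integral_of_le ht0, hint]

lemma uniformOnIcc_prod_add_le {s t : ℝ} (hs : 0 < s) (ht0 : 0 ≤ t) (hts : t ≤ s) :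
    (uniformOnIcc s).prod (uniformOnIcc s) {p | p.1 + p.2 ≤ t}
      = ENNReal.ofReal (t ^ 2 / (2 * s ^ 2)) := by
  have hslice (x : ℝ) : Prod.mk x ⁻¹' {p : ℝ × ℝ | p.1 + p.2 ≤ t} = Iic (t - x) := by
    ext y
    simp only [mem_preimage, mem_ofPred_eq, mem_Iic]
    constructor <;> intro h <;> linarith
  have hmin : ∀ x ∈ Icc 0 s, ENNReal.ofReal (min s (t - x)) = ENNReal.ofReal (t - x) :=
    fun x hx ↦ by rw [min_eq_right (by linarith [hx.1])]
  rw [Measure.prod_apply (measurableSet_le (by fun_prop) (by fun_prop))]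
  simp_rw [hslice, uniformOnIcc_Iic]
  rw [uniformOnIcc, lintegral_smul_measure, lintegral_const_mul _ (by fun_prop),
    setLIntegral_congr_fun measurableSet_Icc hmin, lintegral_Icc_ofReal_sub ht0 hts,
    ← ENNReal.ofReal_inv_of_pos hs, smul_eq_mul, ← ENNReal.ofReal_mul (by positivity),
    ← ENNReal.ofReal_mul (by positivity)]
  congr 1
  field_simp

lemma ProbabilityTheory.IndepFun.measure_add_le_of_map_eq_uniformOnIcc {Ω : Type*}
    [MeasurableSpace Ω] {P : Measure Ω} [IsProbabilityMeasure P] {X Y : Ω → ℝ} (hXm : Measurable X)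
    (hYm : Measurable Y) (hXY : IndepFun X Y P) {s t : ℝ} (hX : P.map X = uniformOnIcc s)
    (hY : P.map Y = uniformOnIcc s) (hs : 0 < s) (ht0 : 0 ≤ t) (hts : t ≤ s) :
    P {ω | X ω + Y ω ≤ t} = ENNReal.ofReal (t ^ 2 / (2 * s ^ 2)) := by
  have hlaw := Measure.map_apply (μ := P) (hXm.prodMk hYm)
    (measurableSet_le (by fun_prop) (by fun_prop) : MeasurableSet {p : ℝ × ℝ | p.1 + p.2 ≤ t})
  rw [hXY.map_prod_eq_prod_map_map hXm.aemeasurable hYm.aemeasurable, hX, hY,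
    uniformOnIcc_prod_add_le hs ht0 hts] at hlaw
  exact hlaw.symm

lemma two_mul_sqrt_mul_one_sub_mul_le (r : ℝ) {c : ℝ} (hc : 0 ≤ c) :
    2 * √(r * (1 - r) * c) ≤ √c := by
  rw [← Real.sqrt_sq zero_le_two, ← Real.sqrt_mul (by positivity)]
  exact Real.sqrt_le_sqrt (by nlinarith [sq_nonneg (2 * r - 1)])

theorem var_subadditive_for_system_general
    {Ω : Type*} [MeasurableSpace Ω] (P : Measure Ω) [IsProbabilityMeasure P]
    (s d : ℝ) (hd : 0 < d) (hds : d < s)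
    (X Y : Ω → ℝ) (hXm : Measurable X) (hYm : Measurable Y)
    (hX : P.map X = uniformOnIcc s) (hY : P.map Y = uniformOnIcc s)
    (hXY : IndepFun X Y P)
    (r : ℝ) (α : ℝ) (hα : α ∈ Ico (1 / 2 : ℝ) 1) :
    P {ω | X ω + Y ω - 2 * d ≤ -(2 * d - s * Real.sqrt (2 * (1 - α)))}
        = ENNReal.ofReal (1 - α) ∧
    2 * d - s * Real.sqrt (2 * (1 - α))
        ≤ 2 * (d - s * Real.sqrt (2 * r * (1 - r) * (1 - α))) := by
  obtain ⟨hα_half, hα_one⟩ := hα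
  have hs : 0 < s := hd.trans hds
  have hc : 0 ≤ 2 * (1 - α) := by linarith
  set t := s * √(2 * (1 - α))
  have ht0 : 0 ≤ t := by positivity
  have hts : t ≤ s := mul_le_of_le_one_right hs.le (Real.sqrt_le_one.mpr (by linarith))
  constructor
  · have hset : {ω | X ω + Y ω - 2 * d ≤ -(2 * d - t)} = {ω | X ω + Y ω ≤ t} := by
      ext ω
      simp only [mem_ofPred_eq]
      constructor <;> intro h <;> linarith
    rw [hset, hXY.measure_add_le_of_map_eq_uniformOnIcc hXm hYm hX hY hs ht0 hts, mul_pow,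
      Real.sq_sqrt hc]
    congr 1
    field_simp
  · have hamgm := two_mul_sqrt_mul_one_sub_mul_le r hc
    rw [show r * (1 - r) * (2 * (1 - α)) = 2 * r * (1 - r) * (1 - α) by ring] at hamgm
    linarith [mul_le_mul_of_nonneg_left hamgm hs.le]

/-- Theorem 3.5: for `α ∈ [1/2, 1)` and `r ∈ (0,1)` with
`s·√(2r(1-r)(1-α)) ≤ (1-r)s` and `s·√(2r(1-r)(1-α)) ≤ rs`, the aggregate position
`X + Y - 2d` satisfies `P(X + Y - 2d ≤ -(2d - s·√(2(1-α)))) = 1 - α`, i.e.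
`VaR_α(X + Y - 2d) = 2d - s·√(2(1-α))`; moreover with `r₁ = r₂ = r` one has
`VaR_α(R(r₁) + R(r₂)) ≤ VaR_α(R(r₁)) + VaR_α(R(r₂))`, i.e.
`2d - s·√(2(1-α)) ≤ 2(d - s·√(2r(1-r)(1-α)))`. -/
theorem var_subadditive_for_system
    {Ω : Type*} [MeasurableSpace Ω] (P : Measure Ω) [IsProbabilityMeasure P]
    (s d : ℝ) (hd : 0 < d) (hds : d < s)
    (X Y : Ω → ℝ) (hXm : Measurable X) (hYm : Measurable Y)
    (hX : P.map X = uniformOnIcc s) (hY : P.map Y = uniformOnIcc s)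
    (hXY : IndepFun X Y P)
    (r : ℝ) (hr : r ∈ Ioo (0 : ℝ) 1) (α : ℝ) (hα : α ∈ Ico (1 / 2 : ℝ) 1)
    (hK1 : s * Real.sqrt (2 * r * (1 - r) * (1 - α)) ≤ (1 - r) * s)
    (hK2 : s * Real.sqrt (2 * r * (1 - r) * (1 - α)) ≤ r * s) :
    P {ω | X ω + Y ω - 2 * d ≤ -(2 * d - s * Real.sqrt (2 * (1 - α)))}
        = ENNReal.ofReal (1 - α) ∧
    2 * d - s * Real.sqrt (2 * (1 - α))
        ≤ 2 * (d - s * Real.sqrt (2 * r * (1 - r) * (1 - α))) :=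
  var_subadditive_for_system_general P s d hd hds X Y hXm hYm hX hY hXY r α hα
end
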